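/- Any holomorphic map from ℂ to ℂ \ {0, 1} is constant (little Picard theorem), i.e. the complement of three points in the Riemann sphere is Brody hyperbolic. -/

import Mathlib

/-!
An entire function omitting `±1` is the cosine of an entire function, since `1 - f²` and then
`f + i √(1 - f²)` have entire logarithms. Two such lifts turn `f` into an entire `g` such that
`cos (π g)` never takes an odd integer value. The points `w` with `cos (π w)` an odd integer are
`3/2`-dense in `ℂ`, whereas the range of a nonconstant entire function contains discs of any
radius: a rescaling argument finds a disc on which `g'` is nearly constant relative to its size,
and the inverse function theorem then produces a large disc in the image. Hence `g`, and with it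
`f`, is constant.
-/

open Complex Metric Set
open scoped Real

theorem Real.three_le_cosh_pi : 3 ≤ Real.cosh π := by
  have := Real.quadratic_le_exp_of_nonneg Real.pi_pos.le
  rw [Real.cosh_eq]
  nlinarith [Real.pi_gt_three, Real.exp_pos (-π)]

theorem Real.cosh_pi_mul_add_two_le {y : ℝ} (hy : 0 ≤ y) :
    Real.cosh (π * y) + 2 ≤ Real.cosh (π * (y + 1)) := by
  rw [mul_add_one, Real.cosh_add]
  have := Real.one_le_cosh (π * y)
  have := Real.sinh_nonneg_iff.mpr (by positivity : 0 ≤ π * y)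
  have := Real.sinh_nonneg_iff.mpr Real.pi_pos.le
  nlinarith [Real.three_le_cosh_pi]

theorem Real.exists_abs_sub_le_one_cosh_pi_mul_eq_odd (y : ℝ) :
    ∃ t : ℝ, |y - t| ≤ 1 ∧ ∃ k : ℤ, Real.cosh (π * t) = 2 * k + 1 := by
  wlog hy : 0 ≤ y generalizing y
  · obtain ⟨t, hyt, hk⟩ := this (-y) (by linarith)
    refine ⟨-t, by rw [← abs_neg]; convert hyt using 2; ring, ?_⟩
    simpa using hk
  set k := ⌈(Real.cosh (π * y) - 1) / 2⌉
  have hk₁ : Real.cosh (π * y) ≤ 2 * k + 1 := by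
    linarith [Int.le_ceil ((Real.cosh (π * y) - 1) / 2)]
  have hk₂ : 2 * k + 1 ≤ Real.cosh (π * (y + 1)) := by
    linarith [Int.ceil_lt_add_one ((Real.cosh (π * y) - 1) / 2), Real.cosh_pi_mul_add_two_le hy]
  obtain ⟨t, ⟨hyt, hty⟩, ht⟩ := intermediate_value_Icc (by linarith : y ≤ y + 1)
    (by fun_prop : Continuous fun t => Real.cosh (π * t)).continuousOn ⟨hk₁, hk₂⟩
  exact ⟨t, abs_le.mpr ⟨by linarith, by linarith⟩, k, ht⟩

theorem Continuous.exists_ball_norm_le_two_mul {X E : Type*} [PseudoMetricSpace X] [ProperSpace X]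
    [NormedAddCommGroup E] {φ : X → E} (hφ : Continuous φ) {z₀ : X} (hz₀ : φ z₀ ≠ 0) {R : ℝ}
    (hR : 0 < R) :
    ∃ a ρ, 0 < ρ ∧ R * ‖φ z₀‖ ≤ 2 * ρ * ‖φ a‖ ∧ ∀ z ∈ ball a ρ, ‖φ z‖ ≤ 2 * ‖φ a‖ := by
  -- `a` maximises `(R - dist z z₀) * ‖φ z‖` on `closedBall z₀ R`
  obtain ⟨a, -, hmax⟩ := (isCompact_closedBall z₀ R).exists_isMaxOn
    (nonempty_closedBall.mpr hR.le)
    ((continuous_const.sub (continuous_id.dist continuous_const)).mul hφ.norm).continuousOn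
  have hmax' : ∀ z ∈ closedBall z₀ R, (R - dist z z₀) * ‖φ z‖ ≤ (R - dist a z₀) * ‖φ a‖ :=
    fun z hz => hmax hz
  have hz₀a := hmax' z₀ (mem_closedBall_self hR.le)
  rw [dist_self, sub_zero] at hz₀a
  have hpos : 0 < (R - dist a z₀) * ‖φ a‖ := hz₀a.trans_lt' (by positivity)
  have hda : dist a z₀ < R := by
    by_contra h
    nlinarith [norm_nonneg (φ a)]
  refine ⟨a, (R - dist a z₀) / 2, by linarith, by linarith, fun z hz => ?_⟩
  have hdz : dist z z₀ < R - (R - dist a z₀) / 2 := by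
    linarith [dist_triangle z a z₀, mem_ball.mp hz]
  have := hmax' z (mem_closedBall.mpr (by linarith))
  nlinarith [norm_nonneg (φ z), norm_nonneg (φ a)]

namespace Complex

theorem exists_differentiable_exp_eq {f : ℂ → ℂ} (hf : Differentiable ℂ f) (hf₀ : ∀ z, f z ≠ 0) :
    ∃ g : ℂ → ℂ, Differentiable ℂ g ∧ ∀ z, exp (g z) = f z := by
  obtain ⟨g, hg₀, hg⟩ := ((hf.deriv.div hf hf₀).isExactOn_univ).with_val_at 0 (log (f 0))
  have hg' : ∀ z, HasDerivAt g (deriv f z / f z) z := fun z => hg z (mem_univ z)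
  have hconst : ∀ z, f z * exp (-g z) = f 0 * exp (-g 0) := by
    refine fun z => is_const_of_deriv_eq_zero
      (hf.mul fun w => (hg' w).differentiableAt.neg.cexp) (fun w => ?_) z 0
    refine ((hf w).hasDerivAt.mul (hg' w).neg.cexp).deriv.trans ?_
    field_simp [hf₀ w]
    ring
  refine ⟨g, fun z => (hg' z).differentiableAt, fun z => ?_⟩
  have := hconst z
  rw [hg₀, exp_neg, exp_neg, exp_log (hf₀ 0), mul_inv_cancel₀ (hf₀ 0)] at this
  field_simp at this
  exact this.symm

theorem exists_differentiable_sq_eq {f : ℂ → ℂ} (hf : Differentiable ℂ f) (hf₀ : ∀ z, f z ≠ 0) :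
    ∃ g : ℂ → ℂ, Differentiable ℂ g ∧ ∀ z, g z ^ 2 = f z := by
  obtain ⟨g, hg, hexp⟩ := exists_differentiable_exp_eq hf hf₀
  refine ⟨fun z => exp (g z / 2), (hg.div_const 2).cexp, fun z => ?_⟩
  rw [← exp_nat_mul, ← hexp]
  ring_nf

theorem exists_differentiable_cos_eq {f : ℂ → ℂ} (hf : Differentiable ℂ f)
    (hf₁ : ∀ z, f z ≠ 1 ∧ f z ≠ -1) :
    ∃ g : ℂ → ℂ, Differentiable ℂ g ∧ ∀ z, cos (g z) = f z := by
  obtain ⟨s, hs, hs_sq⟩ := exists_differentiable_sq_eq (f := fun z => 1 - f z ^ 2) (by fun_prop)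
    fun z h => by
      have : (f z - 1) * (f z + 1) = 0 := by linear_combination -h
      rcases mul_eq_zero.mp this with h | h
      exacts [(hf₁ z).1 (sub_eq_zero.mp h), (hf₁ z).2 (eq_neg_of_add_eq_zero_left h)]
  -- `u = f + i s` satisfies `u⁻¹ = f - i s`, so `f = (u + u⁻¹) / 2 = cosh (log u)`
  have hprod : ∀ z, (f z + I * s z) * (f z - I * s z) = 1 := fun z => by
    linear_combination (-(s z ^ 2)) * I_sq + hs_sq z
  obtain ⟨g, hg, hexp⟩ := exists_differentiable_exp_eq (f := fun z => f z + I * s z)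
    (by fun_prop) fun z h => by simpa [h] using hprod z
  refine ⟨fun z => g z * I, hg.mul_const I, fun z => ?_⟩
  have h2cosh := two_cosh (g z)
  rw [exp_neg, hexp, inv_eq_of_mul_eq_one_right (hprod z)] at h2cosh
  rw [cos_mul_I]
  linear_combination h2cosh / 2

theorem exists_differentiable_cos_pi_mul_eq {f : ℂ → ℂ} (hf : Differentiable ℂ f)
    (hf₀₁ : ∀ z, f z ≠ 0 ∧ f z ≠ 1) :
    ∃ g : ℂ → ℂ, Differentiable ℂ g ∧ ∀ z, cos (π * g z) = 2 * f z - 1 := by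
  obtain ⟨G, hG, hcos⟩ := exists_differentiable_cos_eq (f := fun z => 2 * f z - 1) (by fun_prop)
    fun z => ⟨fun h => (hf₀₁ z).2 (by linear_combination h / 2),
      fun h => (hf₀₁ z).1 (by linear_combination h / 2)⟩
  refine ⟨fun z => G z / π, hG.div_const _, fun z => ?_⟩
  rw [mul_div_cancel₀ _ (ofReal_ne_zero.mpr Real.pi_ne_zero), hcos]

theorem cos_pi_mul_intCast (n : ℤ) : cos (π * n) = (-1) ^ n := by
  rw [mul_comm, ← ofReal_intCast, ← ofReal_mul, ← ofReal_cos, Real.cos_int_mul_pi]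
  push_cast
  rfl

theorem cos_pi_mul_intCast_add_mul_I (m : ℤ) (t : ℝ) :
    cos (π * (m + t * I)) = (-1) ^ m * Real.cosh (π * t) := by
  rw [mul_add, cos_add, cos_pi_mul_intCast, mul_comm (π : ℂ) m, sin_int_mul_pi, ← mul_assoc,
    cos_mul_I]
  push_cast
  ring

theorem exists_dist_le_cos_pi_mul_eq_odd (w : ℂ) :
    ∃ w' : ℂ, dist w w' ≤ 3 / 2 ∧ ∃ k : ℤ, cos (π * w') = 2 * k + 1 := by
  obtain ⟨t, hyt, k, hk⟩ := Real.exists_abs_sub_le_one_cosh_pi_mul_eq_odd w.im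
  set m := round w.re
  refine ⟨m + t * I, ?_, ?_⟩
  · calc dist w (m + t * I) ≤ |w.re - m| + |w.im - t| := by
          refine (dist_eq w _ ▸ norm_le_abs_re_add_abs_im _).trans ?_
          simp
      _ ≤ 1 / 2 + 1 := add_le_add (abs_sub_round w.re) hyt
      _ = 3 / 2 := by norm_num
  · rw [cos_pi_mul_intCast_add_mul_I, hk]
    rcases Int.even_or_odd m with hm | hm
    · exact ⟨k, by rw [hm.neg_one_zpow]; push_cast; ring⟩
    · exact ⟨-k - 1, by rw [hm.neg_one_zpow]; push_cast; ring⟩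

theorem closedBall_subset_image_closedBall_of_hasDerivAt {g g' : ℂ → ℂ} {a : ℂ} {δ : ℝ}
    {c : NNReal} (hδ : 0 ≤ δ) (hg : ∀ z ∈ closedBall a δ, HasDerivAt g (g' z) z) (ha : g' a ≠ 0)
    (hclose : ∀ z ∈ closedBall a δ, ‖g' z - g' a‖ ≤ c) :
    closedBall (g a) ((‖g' a‖ - c) * δ) ⊆ g '' closedBall a δ := by
  set L : ℂ →L[ℂ] ℂ := g' a • ContinuousLinearMap.id ℂ ℂ
  have happrox : ApproximatesLinearOn g L (closedBall a δ) c := by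
    intro x hx y hy
    have hder : ∀ z ∈ closedBall a δ, HasDerivWithinAt (fun z => g z - g' a * z)
        (g' z - g' a) (closedBall a δ) z := fun z hz => by
      have := ((hg z hz).sub ((hasDerivAt_id' z).const_mul (g' a))).hasDerivWithinAt
        (s := closedBall a δ)
      rwa [mul_one] at this
    have := (convex_closedBall a δ).norm_image_sub_le_of_norm_hasDerivWithin_le hder hclose hy hx
    calc ‖g x - g y - L (x - y)‖ = ‖(g x - g' a * x) - (g y - g' a * y)‖ := by
          congr 1; simp [L]; ring
      _ ≤ c * ‖x - y‖ := this
  let Linv : L.NonlinearRightInverse :=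
    { toFun := fun y => (g' a)⁻¹ * y
      nnnorm := ‖g' a‖₊⁻¹
      bound' := fun y => by simp
      right_inv' := fun y => by simp [L, ha] }
  have := happrox.surjOn_closedBall_of_nonlinearRightInverse Linv hδ subset_rfl
  simpa [Linv, SurjOn] using this

theorem exists_closedBall_subset_range {g : ℂ → ℂ} (hg : Differentiable ℂ g)
    (hnc : ∃ z w, g z ≠ g w) {r : ℝ} (hr : 0 < r) : ∃ b, closedBall b r ⊆ range g := by
  obtain ⟨z₀, hz₀⟩ : ∃ z₀, deriv g z₀ ≠ 0 := by
    by_contra! h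
    obtain ⟨z, w, hzw⟩ := hnc
    exact hzw (is_const_of_deriv_eq_zero hg h z w)
  obtain ⟨a, ρ, hρ, hρa, hbound⟩ := hg.deriv.continuous.exists_ball_norm_le_two_mul hz₀
    (R := 32 * r / ‖deriv g z₀‖) (by positivity)
  set M := ‖deriv g a‖
  rw [div_mul_cancel₀ _ (norm_ne_zero_iff.mpr hz₀)] at hρa
  have hM : 0 < M := by nlinarith
  -- Schwarz lemma: `deriv g` varies by at most `M / 4` on the ball of radius `ρ / 12`
  have hclose : ∀ z ∈ closedBall a (ρ / 12),
      ‖deriv g z - deriv g a‖ ≤ (‖deriv g a‖₊ / 4 : NNReal) := by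
    intro z hz
    have hmaps : MapsTo (deriv g) (ball a ρ) (closedBall (deriv g a) (3 * M)) := fun w hw => by
      rw [mem_closedBall, dist_eq_norm]
      linarith [norm_sub_le (deriv g w) (deriv g a), hbound w hw]
    have := dist_le_div_mul_dist_of_mapsTo_ball hg.deriv.differentiableOn hmaps
      (closedBall_subset_ball (by linarith) hz)
    calc ‖deriv g z - deriv g a‖ ≤ 3 * M / ρ * dist z a := by rwa [dist_eq_norm] at this
      _ ≤ 3 * M / ρ * (ρ / 12) := by gcongr; exact mem_closedBall.mp hz
      _ = _ := by simp [M]; field_simp; ring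
  refine ⟨g a, (closedBall_subset_closedBall ?_).trans
    ((closedBall_subset_image_closedBall_of_hasDerivAt (by positivity)
      (fun z _ => (hg z).hasDerivAt) (norm_pos_iff.mp hM) hclose).trans (image_subset_range _ _))⟩
  simp only [NNReal.coe_div, coe_nnnorm, NNReal.coe_ofNat]
  change r ≤ (M - M / 4) * (ρ / 12)
  nlinarith

theorem apply_eq_apply_of_cos_pi_mul_ne_odd {g : ℂ → ℂ} (hg : Differentiable ℂ g)
    (hodd : ∀ z (k : ℤ), cos (π * g z) ≠ 2 * k + 1) (z w : ℂ) : g z = g w := by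
  by_contra hzw
  obtain ⟨b, hb⟩ := exists_closedBall_subset_range hg ⟨z, w, hzw⟩ (by norm_num : (0 : ℝ) < 3 / 2)
  obtain ⟨w', hw', k, hk⟩ := exists_dist_le_cos_pi_mul_eq_odd b
  obtain ⟨z', rfl⟩ := hb (mem_closedBall_comm.mp hw')
  exact hodd z' k hk

end Complex

/-- Little Picard theorem: a holomorphic map from `ℂ` omitting the two values
`0` and `1` is constant (equivalently, the Riemann sphere minus three points
is Brody hyperbolic). -/
theorem little_picard (f : ℂ → ℂ) (hf : Differentiable ℂ f)
    (homit : ∀ z : ℂ, f z ≠ 0 ∧ f z ≠ 1) :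
    ∃ c : ℂ, f = fun _ => c := by
  obtain ⟨h, hh, hfh⟩ := exists_differentiable_cos_pi_mul_eq hf homit
  have h_ne_int : ∀ z (n : ℤ), h z ≠ n := fun z n hn => by
    have := hfh z
    rw [hn, cos_pi_mul_intCast] at this
    rcases Int.even_or_odd n with he | ho
    · exact (homit z).2 (by rw [he.neg_one_zpow] at this; linear_combination -this / 2)
    · exact (homit z).1 (by rw [ho.neg_one_zpow] at this; linear_combination -this / 2)
  obtain ⟨g, hg, hhg⟩ := exists_differentiable_cos_pi_mul_eq hh
    fun z => ⟨by exact_mod_cast h_ne_int z 0, by exact_mod_cast h_ne_int z 1⟩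
  have hg_const := apply_eq_apply_of_cos_pi_mul_ne_odd hg fun z k hk =>
    h_ne_int z (k + 1) (by push_cast; linear_combination (hhg z).symm.trans hk / 2)
  refine ⟨f 0, funext fun z => ?_⟩
  have hh_const : h z = h 0 := by
    have := hhg z
    rw [hg_const z 0, hhg 0] at this
    linear_combination -this / 2
  have := hfh z
  rw [hh_const, hfh 0] at this
  linear_combination -this / 2
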